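/- Let Ω ⊂ ℝᵈ be compact and contained in a ball of radius R. Let K : Ω × Ω → ℝ be a symmetric positive semidefinite kernel with |K(x,x) − K(x,y)| ≤ L‖x−y‖ for all x,y ∈ Ω. Let Rₙ be the residual of the Cholesky algorithm with complete pivoting after n > 1 steps. Then ‖Rₙ‖_∞ ≤ 8LR/(n^{1/d} − 1). -/

import Mathlib

/-- A kernel `K` on a set `Ω` is symmetric positive semidefinite if it is symmetric on `Ω`
and every finite kernel matrix formed from points of `Ω` is positive semidefinite. -/
def IsPSDKernel {E : Type*} (Ω : Set E) (K : E → E → ℝ) : Prop :=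
  (∀ x ∈ Ω, ∀ y ∈ Ω, K x y = K y x) ∧
  ∀ (n : ℕ) (p : Fin n → E), (∀ i, p i ∈ Ω) →
    ∀ c : Fin n → ℝ, 0 ≤ ∑ i, ∑ j, c i * c j * K (p i) (p j)

/-- One pivoted Cholesky step at pivot `z`. -/
noncomputable def cholStep {E : Type*} (R : E → E → ℝ) (z : E) : E → E → ℝ :=
  fun x y => R x y - R x z * R z y / R z z

/-- The residual of the pivoted Cholesky algorithm after successively pivoting at the
points of the list `zs` (in order). -/
noncomputable def cholResid {E : Type*} (K : E → E → ℝ) (zs : List E) : E → E → ℝ :=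
  zs.foldl cholStep K

/-!
Once a pivot `z` has been eliminated its row of the residual vanishes, so the residual diagonal
at any `x` equals the residual's squared kernel distance between `x` and `z`. That quantity never
increases along the algorithm and is at most `2 L ‖x - z‖` for `K` itself. Complete pivoting makes
the diagonal at the `j`-th pivot dominate the whole later diagonal, a volume-packing argument
yields pivots `z i`, `z j` with `i < j` at distance at most `2 R / (n ^ (1 / d) - 1)`, and
positive semidefiniteness bounds the off-diagonal entries of the residual by its diagonal.
-/

open Function Metric MeasureTheory Measure Module

section Packing

variable {E : Type*} [NormedAddCommGroup E] [NormedSpace ℝ E] [FiniteDimensional ℝ E]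
  [MeasurableSpace E] [BorelSpace E]

theorem card_mul_pow_le_of_pairwise_disjoint_ball {ι : Type*} [Fintype ι] {c : E} {R r : ℝ}
    (hR : 0 ≤ R) (hr : 0 < r) {z : ι → E} (hz : ∀ i, z i ∈ closedBall c R)
    (hdisj : Pairwise (Disjoint on fun i => ball (z i) r)) :
    Fintype.card ι * r ^ finrank ℝ E ≤ (R + r) ^ finrank ℝ E := by
  let μ : Measure E := Measure.addHaar
  have hsub : (⋃ i, ball (z i) r) ⊆ ball c (R + r) := by
    refine Set.iUnion_subset fun i w hw => ?_
    rw [mem_ball] at hw ⊢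
    linarith [dist_triangle w (z i) c, mem_closedBall.1 (hz i)]
  have hRr : 0 < R + r := by linarith
  have hvol := measure_mono (μ := μ) hsub
  rw [measure_iUnion hdisj fun _ => measurableSet_ball, tsum_fintype] at hvol
  simp only [addHaar_ball_of_pos μ _ hr, addHaar_ball_of_pos μ _ hRr, Finset.sum_const,
    Finset.card_univ, nsmul_eq_mul, ← mul_assoc] at hvol
  rw [ENNReal.mul_le_mul_iff_left (measure_ball_pos μ _ one_pos).ne' measure_ball_lt_top.ne,
    ← ENNReal.ofReal_natCast, ← ENNReal.ofReal_mul (by positivity),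
    ENNReal.ofReal_le_ofReal_iff (by positivity)] at hvol
  exact hvol

theorem le_two_mul_div_of_pairwise_le_dist {n : ℕ} (hE : 0 < finrank ℝ E) (hn : 1 < n)
    {c : E} {R m : ℝ} (hR : 0 ≤ R) {z : Fin n → E} (hz : ∀ i, z i ∈ closedBall c R)
    (hsep : Pairwise fun i j => m ≤ dist (z i) (z j)) :
    m ≤ 2 * R / ((n : ℝ) ^ ((1 : ℝ) / finrank ℝ E) - 1) := by
  set d := finrank ℝ E
  have hroot : 0 < (n : ℝ) ^ ((1 : ℝ) / d) - 1 :=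
    sub_pos.2 (Real.one_lt_rpow (by exact_mod_cast hn) (by positivity))
  rcases le_or_gt m 0 with hm | hm
  · exact hm.trans (by positivity)
  have hdisj : Pairwise (Disjoint on fun i => ball (z i) (m / 2)) := fun i j hij =>
    ball_disjoint_ball (by linarith [hsep hij])
  have hvol := card_mul_pow_le_of_pairwise_disjoint_ball hR (half_pos hm) hz hdisj
  rw [Fintype.card_fin] at hvol
  have hcount : (n : ℝ) ^ ((1 : ℝ) / d) * (m / 2) ≤ R + m / 2 := by
    rwa [← pow_le_pow_iff_left₀ (by positivity) (by positivity) hE.ne', mul_pow, one_div,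
      Real.rpow_inv_natCast_pow (by positivity) hE.ne']
  rw [le_div_iff₀ hroot]
  linarith

theorem exists_lt_dist_le_of_mem_closedBall {n : ℕ} (hE : 0 < finrank ℝ E) (hn : 1 < n)
    {c : E} {R : ℝ} {z : Fin n → E} (hz : ∀ i, z i ∈ closedBall c R) :
    ∃ i j, i < j ∧ dist (z i) (z j) ≤ 2 * R / ((n : ℝ) ^ ((1 : ℝ) / finrank ℝ E) - 1) := by
  have hpairs : (Finset.univ.filter fun p : Fin n × Fin n => p.1 < p.2).Nonempty :=
    ⟨(⟨0, by omega⟩, ⟨1, hn⟩), by simp⟩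
  obtain ⟨⟨i, j⟩, hij, hmin⟩ :=
    Finset.exists_min_image _ (fun p : Fin n × Fin n => dist (z p.1) (z p.2)) hpairs
  refine ⟨i, j, (Finset.mem_filter.1 hij).2, le_two_mul_div_of_pairwise_le_dist hE hn
    (dist_nonneg.trans (hz i)) hz fun k l hkl => ?_⟩
  rcases hkl.lt_or_gt with h | h
  · exact hmin (k, l) (by simpa using h)
  · exact (hmin (l, k) (by simpa using h)).trans_eq (dist_comm _ _)

end Packing

section Cholesky

variable {E : Type*} {Ω : Set E} {K Q : E → E → ℝ} {x y z : E}

theorem cholResid_cons (K : E → E → ℝ) (z : E) (zs : List E) :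
    cholResid K (z :: zs) = cholResid (cholStep K z) zs := rfl

theorem cholResid_append (K : E → E → ℝ) (zs ws : List E) :
    cholResid K (zs ++ ws) = cholResid (cholResid K zs) ws :=
  List.foldl_append

theorem cholStep_apply_self (Q : E → E → ℝ) (z : E) : cholStep Q z z z = 0 := by
  simp [cholStep, mul_self_div_self]

/-- `‖K(x, ·) - K(y, ·)‖²` in the reproducing kernel Hilbert space of `Q`. -/
def kernelSqDist (Q : E → E → ℝ) (x y : E) : ℝ :=
  Q x x - 2 * Q x y + Q y y

namespace IsPSDKernel

theorem symm (hQ : IsPSDKernel Ω Q) (hx : x ∈ Ω) (hy : y ∈ Ω) : Q x y = Q y x :=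
  hQ.1 x hx y hy

theorem quadForm_nonneg_two (hQ : IsPSDKernel Ω Q) (hx : x ∈ Ω) (hy : y ∈ Ω) (a b : ℝ) :
    0 ≤ a * a * Q x x + 2 * (a * b) * Q x y + b * b * Q y y := by
  have h := hQ.2 2 ![x, y] (by simp [Fin.forall_fin_two, hx, hy]) ![a, b]
  simp only [Fin.sum_univ_two, Matrix.cons_val_zero, Matrix.cons_val_one] at h
  rw [hQ.symm hy hx] at h
  linarith

theorem apply_self_nonneg (hQ : IsPSDKernel Ω Q) (hx : x ∈ Ω) : 0 ≤ Q x x := by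
  simpa using hQ.quadForm_nonneg_two hx hx 1 0

theorem sq_le_mul (hQ : IsPSDKernel Ω Q) (hx : x ∈ Ω) (hy : y ∈ Ω) :
    Q x y ^ 2 ≤ Q x x * Q y y := by
  have h := discrim_le_zero (a := Q y y) (b := 2 * Q x y) (c := Q x x) fun t => by
    linarith [hQ.quadForm_nonneg_two hx hy 1 t]
  rw [discrim] at h
  linarith

theorem abs_le_of_apply_self_le (hQ : IsPSDKernel Ω Q) (hx : x ∈ Ω) (hy : y ∈ Ω) {B : ℝ}
    (hxB : Q x x ≤ B) (hyB : Q y y ≤ B) : |Q x y| ≤ B := by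
  have hB : 0 ≤ B := (hQ.apply_self_nonneg hx).trans hxB
  refine abs_le_of_sq_le_sq ((hQ.sq_le_mul hx hy).trans ?_) hB
  rw [sq]
  exact mul_le_mul hxB hyB (hQ.apply_self_nonneg hy) hB

theorem cholStep (hQ : IsPSDKernel Ω Q) (hz : z ∈ Ω) : IsPSDKernel Ω (cholStep Q z) := by
  refine ⟨fun x hx y hy => ?_, fun m p hp c => ?_⟩
  · simp only [_root_.cholStep]
    rw [hQ.symm hx hy, hQ.symm hx hz, hQ.symm hz hy]
    ring
  rcases (hQ.apply_self_nonneg hz).eq_or_lt with hzz | hzz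
  -- division by `Q z z = 0` makes the step the identity
  · simpa [_root_.cholStep, ← hzz] using hQ.2 m p hp c
  set s := ∑ i, c i * Q (p i) z
  set t := -s / Q z z
  -- Schur complement: the form of the step at `c` is the form of `Q` at `c` extended by `t` at `z`
  have hsnoc := hQ.2 (m + 1) (Fin.snoc p z) (Fin.lastCases (by simpa) (by simpa)) (Fin.snoc c t)
  have hzp : ∀ j, Q z (p j) = Q (p j) z := fun j => hQ.symm hz (hp j)
  have hlin : ∀ a : ℝ, ∑ i, c i * a * Q (p i) z = a * s := fun a => by
    rw [Finset.mul_sum]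
    exact Finset.sum_congr rfl fun i _ => by ring
  have hcross : ∑ i, ∑ j, c i * c j * (Q (p i) z * Q z (p j) / Q z z) = s * s / Q z z := by
    simp only [s, hzp, Finset.sum_mul_sum, Finset.sum_div]
    exact Finset.sum_congr rfl fun i _ => Finset.sum_congr rfl fun j _ => by ring
  have ht : t * s + (t * s + t * t * Q z z) = -(s * s / Q z z) := by
    simp only [t]
    field_simp
    ring
  simp only [Fin.sum_univ_castSucc, Fin.snoc_castSucc, Fin.snoc_last, Finset.sum_add_distrib,
    hzp, mul_comm t, hlin] at hsnoc
  simp only [_root_.cholStep, mul_sub, Finset.sum_sub_distrib, hcross]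
  linarith

theorem cholStep_apply_self_le (hQ : IsPSDKernel Ω Q) (hz : z ∈ Ω) (hx : x ∈ Ω) :
    _root_.cholStep Q z x x ≤ Q x x := by
  have hsq : 0 ≤ Q x z * Q z x / Q z z := by
    rw [hQ.symm hz hx]
    exact div_nonneg (mul_self_nonneg _) (hQ.apply_self_nonneg hz)
  simp only [_root_.cholStep]
  linarith

theorem kernelSqDist_cholStep_le (hQ : IsPSDKernel Ω Q) (hz : z ∈ Ω) (hx : x ∈ Ω)
    (hy : y ∈ Ω) : kernelSqDist (_root_.cholStep Q z) x y ≤ kernelSqDist Q x y := by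
  have hgap : kernelSqDist (_root_.cholStep Q z) x y
      = kernelSqDist Q x y - (Q x z - Q y z) ^ 2 / Q z z := by
    simp only [kernelSqDist, _root_.cholStep]
    rw [hQ.symm hz hx, hQ.symm hz hy]
    ring
  rw [hgap, sub_le_self_iff]
  exact div_nonneg (sq_nonneg _) (hQ.apply_self_nonneg hz)

variable {zs : List E}

theorem cholResid (hK : IsPSDKernel Ω K) (hzs : ∀ z ∈ zs, z ∈ Ω) :
    IsPSDKernel Ω (_root_.cholResid K zs) := by
  induction zs generalizing K with
  | nil => exact hK
  | cons z zs ih =>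
    simp only [List.forall_mem_cons] at hzs
    exact ih (hK.cholStep hzs.1) hzs.2

theorem cholResid_apply_self_le (hK : IsPSDKernel Ω K) (hzs : ∀ z ∈ zs, z ∈ Ω) (hx : x ∈ Ω) :
    _root_.cholResid K zs x x ≤ K x x := by
  induction zs generalizing K with
  | nil => exact le_rfl
  | cons z zs ih =>
    simp only [List.forall_mem_cons] at hzs
    exact (ih (hK.cholStep hzs.1) hzs.2).trans (hK.cholStep_apply_self_le hzs.1 hx)

theorem cholResid_append_apply_self_le {ws : List E} (hK : IsPSDKernel Ω K)
    (hzs : ∀ z ∈ zs ++ ws, z ∈ Ω) (hx : x ∈ Ω) :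
    _root_.cholResid K (zs ++ ws) x x ≤ _root_.cholResid K zs x x := by
  simp only [List.forall_mem_append] at hzs
  rw [cholResid_append]
  exact (hK.cholResid hzs.1).cholResid_apply_self_le hzs.2 hx

theorem kernelSqDist_cholResid_le (hK : IsPSDKernel Ω K) (hzs : ∀ z ∈ zs, z ∈ Ω) (hx : x ∈ Ω)
    (hy : y ∈ Ω) : kernelSqDist (_root_.cholResid K zs) x y ≤ kernelSqDist K x y := by
  induction zs generalizing K with
  | nil => exact le_rfl
  | cons z zs ih =>
    simp only [List.forall_mem_cons] at hzs
    exact (ih (hK.cholStep hzs.1) hzs.2).trans (hK.kernelSqDist_cholStep_le hzs.1 hx hy)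

theorem cholResid_apply_eq_zero_of_mem (hK : IsPSDKernel Ω K) (hzs : ∀ z ∈ zs, z ∈ Ω)
    (hz : z ∈ zs) (hx : x ∈ Ω) : _root_.cholResid K zs z x = 0 := by
  obtain ⟨as, bs, rfl⟩ := List.append_of_mem hz
  have hzΩ := hzs z hz
  have hdiag : _root_.cholResid K (as ++ z :: bs) z z = 0 := by
    refine le_antisymm ?_ ((hK.cholResid hzs).apply_self_nonneg hzΩ)
    have hQ := (hK.cholResid fun w hw => hzs w (List.mem_append_left _ hw)).cholStep hzΩ
    rw [cholResid_append, cholResid_cons, ← cholStep_apply_self (_root_.cholResid K as) z]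
    exact hQ.cholResid_apply_self_le
      (fun w hw => hzs w (List.mem_append_right _ (List.mem_cons_of_mem _ hw))) hzΩ
  have := (hK.cholResid hzs).sq_le_mul hzΩ hx
  rw [hdiag, zero_mul] at this
  exact pow_eq_zero_iff two_ne_zero |>.1 (le_antisymm this (sq_nonneg _))

end IsPSDKernel

end Cholesky

section Lipschitz

variable {E : Type*} [SeminormedAddCommGroup E] {Ω : Set E} {K : E → E → ℝ} {L : ℝ} {x y z : E}

namespace IsPSDKernel

theorem kernelSqDist_le (hK : IsPSDKernel Ω K)
    (hLip : ∀ x ∈ Ω, ∀ y ∈ Ω, |K x x - K x y| ≤ L * ‖x - y‖) (hx : x ∈ Ω) (hy : y ∈ Ω) :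
    kernelSqDist K x y ≤ 2 * L * ‖x - y‖ := by
  have hxy := (abs_le.1 (hLip x hx y hy)).2
  have hyx := (abs_le.1 (hLip y hy x hx)).2
  rw [norm_sub_rev, ← hK.symm hx hy] at hyx
  rw [kernelSqDist]
  linarith

theorem cholResid_apply_self_le_of_mem (hK : IsPSDKernel Ω K)
    (hLip : ∀ x ∈ Ω, ∀ y ∈ Ω, |K x x - K x y| ≤ L * ‖x - y‖) {zs : List E}
    (hzs : ∀ z ∈ zs, z ∈ Ω) (hz : z ∈ zs) (hx : x ∈ Ω) :
    _root_.cholResid K zs x x ≤ 2 * L * ‖x - z‖ := by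
  have hzΩ := hzs z hz
  calc _root_.cholResid K zs x x = kernelSqDist (_root_.cholResid K zs) x z := by
        rw [kernelSqDist, (hK.cholResid hzs).symm hx hzΩ,
          hK.cholResid_apply_eq_zero_of_mem hzs hz hx,
          hK.cholResid_apply_eq_zero_of_mem hzs hz hzΩ]
        ring
    _ ≤ kernelSqDist K x z := hK.kernelSqDist_cholResid_le hzs hx hzΩ
    _ ≤ 2 * L * ‖x - z‖ := hK.kernelSqDist_le hLip hx hzΩ

end IsPSDKernel

end Lipschitz

theorem complete_pivoting_convergence_general {d n : ℕ} (hd : 0 < d) (hn : 1 < n)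
    (Ω : Set (EuclideanSpace ℝ (Fin d)))
    (c : EuclideanSpace ℝ (Fin d)) (R : ℝ) (hball : Ω ⊆ Metric.closedBall c R)
    (K : EuclideanSpace ℝ (Fin d) → EuclideanSpace ℝ (Fin d) → ℝ)
    (hK : IsPSDKernel Ω K) (L : ℝ) (hL : 0 < L)
    (hLip : ∀ x ∈ Ω, ∀ y ∈ Ω, |K x x - K x y| ≤ L * ‖x - y‖)
    (z : Fin n → EuclideanSpace ℝ (Fin d)) (hzΩ : ∀ i, z i ∈ Ω)
    -- complete pivoting: `z k` maximizes the diagonal of the current residual over `Ω`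
    (hcp : ∀ k : Fin n, ∀ x ∈ Ω,
      cholResid K ((List.ofFn z).take k) x x ≤
        cholResid K ((List.ofFn z).take k) (z k) (z k)) :
    ∀ x ∈ Ω, ∀ y ∈ Ω,
      |cholResid K (List.ofFn z) x y| ≤
        8 * L * R / ((n : ℝ) ^ ((1 : ℝ) / (d : ℝ)) - 1) := by
  intro x hx y hy
  have hzs : ∀ w ∈ List.ofFn z, w ∈ Ω := by simpa [List.mem_ofFn] using hzΩ
  have hR : 0 ≤ R := dist_nonneg.trans (hball (hzΩ ⟨0, by omega⟩))
  obtain ⟨i, j, hij, hclose⟩ :=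
    exists_lt_dist_le_of_mem_closedBall (by simpa using hd) hn fun i => hball (hzΩ i)
  rw [finrank_euclideanSpace_fin] at hclose
  set D := (n : ℝ) ^ ((1 : ℝ) / (d : ℝ)) - 1
  have hD : 0 < D := sub_pos.2 (Real.one_lt_rpow (by exact_mod_cast hn) (by positivity))
  have hzi : z i ∈ (List.ofFn z).take j := List.mem_iff_getElem.2 ⟨i, by simp [hij], by simp⟩
  have hdiag : ∀ w ∈ Ω, cholResid K (List.ofFn z) w w ≤ 4 * L * R / D := fun w hw =>
    calc cholResid K (List.ofFn z) w w ≤ cholResid K ((List.ofFn z).take j) w w := by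
          simpa using hK.cholResid_append_apply_self_le (zs := (List.ofFn z).take j)
            (ws := (List.ofFn z).drop j) (by rwa [List.take_append_drop]) hw
      _ ≤ cholResid K ((List.ofFn z).take j) (z j) (z j) := hcp j w hw
      _ ≤ 2 * L * dist (z j) (z i) := hK.cholResid_apply_self_le_of_mem hLip
            (fun v hv => hzs v (List.mem_of_mem_take hv)) hzi (hzΩ j)
      _ ≤ 2 * L * (2 * R / D) := by rw [dist_comm]; gcongr
      _ = 4 * L * R / D := by ring
  calc |cholResid K (List.ofFn z) x y| ≤ 4 * L * R / D :=
        (hK.cholResid hzs).abs_le_of_apply_self_le hx hy (hdiag x hx) (hdiag y hy)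
    _ ≤ 8 * L * R / D := by gcongr; linarith [mul_nonneg hL.le hR]

theorem complete_pivoting_convergence {d n : ℕ} (hd : 0 < d) (hn : 1 < n)
    (Ω : Set (EuclideanSpace ℝ (Fin d))) (hΩ : IsCompact Ω)
    (c : EuclideanSpace ℝ (Fin d)) (R : ℝ) (hball : Ω ⊆ Metric.closedBall c R)
    (K : EuclideanSpace ℝ (Fin d) → EuclideanSpace ℝ (Fin d) → ℝ)
    (hK : IsPSDKernel Ω K) (L : ℝ) (hL : 0 < L)
    (hLip : ∀ x ∈ Ω, ∀ y ∈ Ω, |K x x - K x y| ≤ L * ‖x - y‖)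
    (z : Fin n → EuclideanSpace ℝ (Fin d)) (hzΩ : ∀ i, z i ∈ Ω)
    -- well-definedness: each selected pivot has a positive diagonal residual
    (hwd : ∀ k : Fin n,
      0 < cholResid K ((List.ofFn z).take k) (z k) (z k))
    -- complete pivoting: `z k` maximizes the diagonal of the current residual over `Ω`
    (hcp : ∀ k : Fin n, ∀ x ∈ Ω,
      cholResid K ((List.ofFn z).take k) x x ≤
        cholResid K ((List.ofFn z).take k) (z k) (z k)) :
    ∀ x ∈ Ω, ∀ y ∈ Ω,
      |cholResid K (List.ofFn z) x y| ≤
        8 * L * R / ((n : ℝ) ^ ((1 : ℝ) / (d : ℝ)) - 1) :=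
  complete_pivoting_convergence_general hd hn Ω c R hball K hK L hL hLip z hzΩ hcp
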